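/- arXiv:2507.12447 — 2 statements merged into one kernel-verified Lean document; each statement's English description precedes it below -/
import Mathlib

section
/- The family of power classes does not cover the space of admissible losses: there exists a continuous function L : ℝ × ℝ → ℝ with L(θ,a) ≥ 0 for all θ, a, with L(θ,a) = 0 if and only if a = θ, such that L does not belong to 𝓛_p for any exponent p > 0. (For example, L(θ,a) = |θ − a| / (1 + |log |θ − a||) for a ≠ θ and L(θ,θ) = 0 is such a loss.) -/
open Filter Asymptotics

/-- The power class `𝓛_p`: the set of continuous nonnegative losses
`L : ℝ × ℝ → ℝ` admitting a constant `c > 0` such that, for every `θ`,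
`a ↦ L(θ,a) - c·|θ - a|^p` is `o(|θ - a|^p)` as `a → θ`. -/
def PowerClass (p : ℝ) : Set (ℝ × ℝ → ℝ) :=
  {L | Continuous L ∧ (∀ θ a : ℝ, 0 ≤ L (θ, a)) ∧
    ∃ c : ℝ, 0 < c ∧
      ∀ θ : ℝ,
        (fun a : ℝ => L (θ, a) - c * |θ - a| ^ p) =o[nhds θ] (fun a : ℝ => |θ - a| ^ p)}

/-!
A loss in `𝓛_p` is comparable to `c·|θ - a|^p` near the diagonal, so it cannot be
`o(|θ - a|^p)` there. The loss `exp (-1 / |θ - a|)` is smooth, vanishes exactly on the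
diagonal, and is `o(|θ - a|^p)` for every `p`, since `u^p e^{-u} → 0` as `u = 1/|θ - a| → ∞`.
-/

open Topology

theorem expNegInvGlue_isLittleO_rpow (p : ℝ) :
    expNegInvGlue =o[𝓝[>] 0] (· ^ p) := by
  have hpos : ∀ᶠ t in 𝓝[>] (0 : ℝ), 0 < t := self_mem_nhdsWithin
  rw [isLittleO_iff_tendsto' (hpos.mono fun t ht h => absurd h (Real.rpow_pos_of_pos ht p).ne')]
  refine ((tendsto_rpow_mul_exp_neg_mul_atTop_nhds_zero p 1 one_pos).comp
    tendsto_inv_nhdsGT_zero).congr' (hpos.mono fun t ht => ?_)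
  simp [expNegInvGlue, not_le.2 ht, Real.inv_rpow ht.le, div_eq_inv_mul]

theorem expNegInvGlue_abs_isLittleO_rpow_abs (p : ℝ) :
    (fun x => expNegInvGlue |x|) =o[𝓝 0] (fun x => |x| ^ p) := by
  rw [← nhdsNE_sup_pure]
  exact ((expNegInvGlue_isLittleO_rpow p).comp_tendsto tendsto_abs_nhdsNE_zero).sup
    (isLittleO_pure.2 (by simp))

theorem not_isLittleO_rpow_of_mem_powerClass {p : ℝ} {L : ℝ × ℝ → ℝ} (hL : L ∈ PowerClass p)
    (θ : ℝ) : ¬ (fun a => L (θ, a)) =o[𝓝 θ] (fun a => |θ - a| ^ p) := by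
  obtain ⟨-, -, c, hc, hL⟩ := hL
  intro hflat
  have hpow : (fun a => |θ - a| ^ p) =o[𝓝 θ] (fun a => |θ - a| ^ p) := by
    simpa [hc.ne'] using (hflat.sub (hL θ)).const_mul_left c⁻¹
  refine isLittleO_irrefl ?_ hpow
  refine ((eventually_mem_nhdsWithin (a := θ) (s := {θ}ᶜ)).frequently.filter_mono
    nhdsWithin_le_nhds).mono fun a ha => ?_
  exact (Real.rpow_pos_of_pos (abs_pos.2 (sub_ne_zero.2 (Ne.symm ha))) p).ne'

noncomputable def flatLoss (x : ℝ × ℝ) : ℝ := expNegInvGlue |x.1 - x.2|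

theorem continuous_flatLoss : Continuous flatLoss :=
  (expNegInvGlue.contDiff (n := 0)).continuous.comp (continuous_fst.sub continuous_snd).abs

theorem flatLoss_nonneg (x : ℝ × ℝ) : 0 ≤ flatLoss x := expNegInvGlue.nonneg _

theorem flatLoss_eq_zero_iff {θ a : ℝ} : flatLoss (θ, a) = 0 ↔ a = θ := by
  simp [flatLoss, sub_eq_zero, eq_comm]

theorem flatLoss_not_mem_powerClass (p : ℝ) : flatLoss ∉ PowerClass p := fun hL =>
  not_isLittleO_rpow_of_mem_powerClass hL 0 <| by
    simpa [flatLoss] using expNegInvGlue_abs_isLittleO_rpow_abs p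

/-- The power classes do not cover the space of admissible losses: there is a
continuous, nonnegative loss vanishing exactly on the diagonal that belongs to
no power class `𝓛_p` with `p > 0`. -/
theorem exists_loss_not_in_any_powerClass :
    ∃ L : ℝ × ℝ → ℝ, Continuous L ∧ (∀ θ a : ℝ, 0 ≤ L (θ, a)) ∧
      (∀ θ a : ℝ, L (θ, a) = 0 ↔ a = θ) ∧
      ∀ p : ℝ, 0 < p → L ∉ PowerClass p :=
  ⟨flatLoss, continuous_flatLoss, fun _ _ => flatLoss_nonneg _, fun _ _ => flatLoss_eq_zero_iff,
    fun p _ => flatLoss_not_mem_powerClass p⟩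
end

section
/- Differentiability of the power risk under the Gaussian measure: let γ be the standard Gaussian probability measure on ℝ (mean 0, variance 1) and let q > 1. Define f(α) := ∫ |z − α|^q dγ(z). Then for every α ∈ ℝ, f is differentiable at α with derivative f′(α) = −q · ∫ sign(z − α) · |z − α|^{q−1} dγ(z), where sign denotes the real sign function. -/
open MeasureTheory ProbabilityTheory

/-!
Differentiate under the integral sign. For each `z`, `a ↦ |z - a|^q` is differentiable with
derivative `-q · sign(z - a) · |z - a|^(q-1)`; for `|a - α| < 1` this is dominated by
`q (|z - α| + 1)^(q-1)`, which is integrable as soon as the (finite) measure has a finite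
`q`-th moment, as the Gaussian does.
-/

namespace Real

theorem measurable_sign : Measurable Real.sign := by
  change Measurable fun r : ℝ ↦ if r < 0 then (-1 : ℝ) else if 0 < r then 1 else 0
  exact measurable_const.ite (measurableSet_lt measurable_id measurable_const)
    (measurable_const.ite (measurableSet_lt measurable_const measurable_id) measurable_const)

theorem abs_sign_le_one (x : ℝ) : |Real.sign x| ≤ 1 := by
  rcases sign_apply_eq x with h | h | h <;> simp [h]

theorem sign_mul_abs_rpow_sub_one (x p : ℝ) :
    Real.sign x * |x| ^ (p - 1) = |x| ^ (p - 2) * x := by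
  rcases lt_trichotomy x 0 with hx | rfl | hx
  · rw [sign_of_neg hx, abs_of_neg hx, show p - 1 = p - 2 + 1 by ring,
      rpow_add_one (by linarith)]
    ring
  · simp [sign_zero]
  · rw [sign_of_pos hx, abs_of_pos hx, show p - 1 = p - 2 + 1 by ring,
      rpow_add_one hx.ne']
    ring

theorem hasDerivAt_abs_rpow' (x : ℝ) {p : ℝ} (hp : 1 < p) :
    HasDerivAt (fun x : ℝ ↦ |x| ^ p) (p * (Real.sign x * |x| ^ (p - 1))) x := by
  rw [sign_mul_abs_rpow_sub_one, ← mul_assoc]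
  exact hasDerivAt_abs_rpow x hp

end Real

theorem hasDerivAt_abs_sub_rpow (z a : ℝ) {p : ℝ} (hp : 1 < p) :
    HasDerivAt (fun a : ℝ ↦ |z - a| ^ p) (-p * (Real.sign (z - a) * |z - a| ^ (p - 1))) a :=
  (Real.hasDerivAt_abs_rpow' (z - a) hp).comp a ((hasDerivAt_id a).const_sub z)
    |>.congr_deriv (by ring)

theorem integrable_abs_sub_add_rpow {μ : Measure ℝ} [IsFiniteMeasure μ] {p : ℝ} (hp : 0 ≤ p)
    (hμ : MemLp id (ENNReal.ofReal p) μ) (α : ℝ) {c : ℝ} (hc : 0 ≤ c) :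
    Integrable (fun z ↦ (|z - α| + c) ^ p) μ := by
  have hmem : MemLp (fun z ↦ |z - α| + c) (ENNReal.ofReal p) μ :=
    (hμ.sub (memLp_const α)).norm.add (memLp_const c)
  convert hmem.integrable_norm_rpow' using 2 with z
  rw [ENNReal.toReal_ofReal hp, Real.norm_of_nonneg (by positivity)]

theorem hasDerivAt_integral_abs_sub_rpow {μ : Measure ℝ} [IsFiniteMeasure μ] {q : ℝ}
    (hq : 1 < q) (hμ : MemLp id (ENNReal.ofReal q) μ) (α : ℝ) :
    HasDerivAt (fun a : ℝ ↦ ∫ z, |z - a| ^ q ∂μ)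
      (-q * ∫ z, Real.sign (z - α) * |z - α| ^ (q - 1) ∂μ) α := by
  have hμ' : MemLp id (ENNReal.ofReal (q - 1)) μ :=
    hμ.mono_exponent (ENNReal.ofReal_le_ofReal (by linarith))
  have h_bound : ∀ z, ∀ a ∈ Metric.ball α 1,
      ‖-q * (Real.sign (z - a) * |z - a| ^ (q - 1))‖ ≤ q * (|z - α| + 1) ^ (q - 1) := by
    intro z a ha
    have hza : |z - a| ≤ |z - α| + 1 := by
      have := abs_sub_le z α a
      rw [Metric.mem_ball, Real.dist_eq, abs_sub_comm] at ha
      linarith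
    have hpow : 0 ≤ |z - a| ^ (q - 1) := by positivity
    rw [norm_mul, norm_mul, norm_neg, Real.norm_of_nonneg (by linarith : 0 ≤ q),
      Real.norm_of_nonneg hpow, Real.norm_eq_abs]
    gcongr
    calc |Real.sign (z - a)| * |z - a| ^ (q - 1) ≤ 1 * |z - a| ^ (q - 1) := by
          gcongr; exact Real.abs_sign_le_one _
      _ ≤ (|z - α| + 1) ^ (q - 1) := by
          rw [one_mul]; exact Real.rpow_le_rpow (abs_nonneg _) hza (by linarith)
  have key := hasDerivAt_integral_of_dominated_loc_of_deriv_le (Metric.ball_mem_nhds α one_pos)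
    (.of_forall fun a ↦ (by fun_prop : Measurable fun z : ℝ ↦ |z - a| ^ q).aestronglyMeasurable)
    (by simpa using integrable_abs_sub_add_rpow (by linarith) hμ α le_rfl)
    ((Real.measurable_sign.comp (measurable_id.sub_const α)).mul (by fun_prop)
      |>.const_mul (-q)).aestronglyMeasurable
    (.of_forall (h_bound ·))
    ((integrable_abs_sub_add_rpow (by linarith) hμ' α zero_le_one).const_mul q)
    (.of_forall fun z a _ ↦ hasDerivAt_abs_sub_rpow z a hq)
  simpa only [integral_const_mul] using key.2

/-- Differentiability of the power risk under the standard Gaussian measure: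
for `q > 1`, the function `f(α) = ∫ |z - α|^q dγ(z)` (with `γ` the standard
Gaussian) is differentiable at every `α`, with derivative
`f'(α) = -q · ∫ sign(z - α) · |z - α|^(q-1) dγ(z)`. -/
theorem hasDerivAt_gaussian_power_risk (q : ℝ) (hq : 1 < q) (α : ℝ) :
    HasDerivAt (fun a : ℝ => ∫ z, |z - a| ^ q ∂(gaussianReal 0 1))
      (-q * ∫ z, Real.sign (z - α) * |z - α| ^ (q - 1) ∂(gaussianReal 0 1)) α :=
  hasDerivAt_integral_abs_sub_rpow hq (memLp_id_gaussianReal' _ ENNReal.ofReal_ne_top) α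
end
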